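/- The ℚ-algebra endomorphism of ℚ[c₁,c₂,d₂] fixing c₁ and d₂ and sending c₂ to 3d₂ − c₂ maps the ideal I (generated by c₁⁴ + 3c₂² − 9c₂d₂ − 3d₂², c₁²c₂ − c₂d₂ − 3d₂², c₁²d₂ − 3d₂², 9c₁c₂² − 14c₁c₂d₂, 3c₁d₂² − 2c₁c₂d₂) into itself, and therefore induces a ring involution of R = ℚ[c₁,c₂,d₂]/I. -/

import Mathlib

open MvPolynomial

noncomputable section

abbrev c1 : MvPolynomial (Fin 3) ℚ := X 0
abbrev c2 : MvPolynomial (Fin 3) ℚ := X 1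
abbrev d2 : MvPolynomial (Fin 3) ℚ := X 2

def chowIdeal : Ideal (MvPolynomial (Fin 3) ℚ) :=
  Ideal.span {c1 ^ 4 + 3 * c2 ^ 2 - 9 * c2 * d2 - 3 * d2 ^ 2,
    c1 ^ 2 * c2 - c2 * d2 - 3 * d2 ^ 2,
    c1 ^ 2 * d2 - 3 * d2 ^ 2,
    9 * c1 * c2 ^ 2 - 14 * c1 * c2 * d2,
    3 * c1 * d2 ^ 2 - 2 * c1 * c2 * d2}

/-- The ℚ-algebra endomorphism fixing `c₁, d₂` and sending `c₂ ↦ 3d₂ − c₂`. -/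
def invol : MvPolynomial (Fin 3) ℚ →ₐ[ℚ] MvPolynomial (Fin 3) ℚ :=
  MvPolynomial.aeval ![c1, 3 * d2 - c2, d2]

@[simp] lemma invol_c1 : invol c1 = c1 := aeval_X _ _

@[simp] lemma invol_c2 : invol c2 = 3 * d2 - c2 := aeval_X _ _

@[simp] lemma invol_d2 : invol d2 = d2 := aeval_X _ _

lemma invol_invol (p : MvPolynomial (Fin 3) ℚ) : invol (invol p) = p := by
  suffices invol.comp invol = AlgHom.id ℚ _ from AlgHom.congr_fun this p
  refine algHom_ext fun i => ?_
  fin_cases i <;> simp [map_ofNat]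

/-- The images of the five generators `g₁, …, g₅` of `chowIdeal` under `invol` are
`g₁`, `3 g₃ - g₂`, `g₃`, `g₄ + 13 g₅` and `-g₅`. -/
lemma chowIdeal_le_comap_invol : chowIdeal ≤ chowIdeal.comap invol := by
  obtain ⟨g₁, g₂, g₃, g₄, g₅⟩ : _ ∧ _ ∧ _ ∧ _ ∧ _ := by
    simpa only [Set.insert_subset_iff, Set.singleton_subset_iff, SetLike.mem_coe] using
      Ideal.span_le.1 (le_refl chowIdeal)
  refine Ideal.span_le.2 ?_
  simp only [Set.insert_subset_iff, Set.singleton_subset_iff, SetLike.mem_coe, Ideal.mem_comap,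
    map_sub, map_add, map_mul, map_pow, map_ofNat, invol_c1, invol_c2, invol_d2]
  refine ⟨?_, ?_, ?_, ?_, ?_⟩
  · convert g₁ using 1
    ring
  · convert chowIdeal.sub_mem (chowIdeal.mul_mem_left 3 g₃) g₂ using 1
    ring
  · exact g₃
  · convert chowIdeal.add_mem g₄ (chowIdeal.mul_mem_left 13 g₅) using 1
    ring
  · convert chowIdeal.mul_mem_left (-1) g₅ using 1
    ring

theorem invol_preserves_chowIdeal :
    (∀ p ∈ chowIdeal, invol p ∈ chowIdeal) ∧
    (∀ p : MvPolynomial (Fin 3) ℚ, invol (invol p) = p) :=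
  ⟨fun _ hp => chowIdeal_le_comap_invol hp, invol_invol⟩

end
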